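/- Let γ > 0, c ∈ ℝ and write G(u) = G(u; γ, c). If the function f(u) = b₁·(u − c)·G(u)·(1 − G(u)) + b₂·G(u)·(1 − G(u)) is constant on ℝ, then b₁ = b₂ = 0. -/

import Mathlib

/-- The logistic transition function `G(u; γ, c) = (1 + exp(−γ(u − c)))⁻¹`. -/
noncomputable def G (γ c u : ℝ) : ℝ := (1 + Real.exp (-γ * (u - c)))⁻¹

/-!
Write `s(u) = G(u)(1 − G(u))`. Since `G(c − t) = 1 − G(c + t)`, the bump `s` is symmetric about `c`,
so `f(c + 1) − f(c − 1) = 2 b₁ s(c + 1)`, and `s > 0` forces `b₁ = 0`. Then `f = b₂ s`, and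
`s(c) = 1/4 > s(c + 1)` forces `b₂ = 0`.
-/

open Real

lemma G_pos (γ c u : ℝ) : 0 < G γ c u := by
  unfold G
  positivity

lemma G_lt_one (γ c u : ℝ) : G γ c u < 1 := by
  unfold G
  exact inv_lt_one_of_one_lt₀ (by linarith [exp_pos (-γ * (u - c))])

lemma G_self (γ c : ℝ) : G γ c c = 2⁻¹ := by
  norm_num [G]

lemma G_reflect (γ c t : ℝ) : G γ c (c - t) = 1 - G γ c (c + t) := by
  unfold G
  rw [show -γ * (c - t - c) = γ * t by ring, show -γ * (c + t - c) = -(γ * t) by ring, exp_neg]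
  field_simp
  ring

lemma G_ne_half {γ t : ℝ} (hγ : γ ≠ 0) (ht : t ≠ 0) (c : ℝ) : G γ c (c + t) ≠ 2⁻¹ := by
  intro h
  unfold G at h
  have hexp : exp (-γ * (c + t - c)) = 1 := by linarith [inv_inj.mp h]
  rw [exp_eq_one_iff] at hexp
  exact mul_ne_zero (neg_ne_zero.mpr hγ) (by simpa using ht) hexp

lemma G_mul_one_sub_G_pos (γ c u : ℝ) : 0 < G γ c u * (1 - G γ c u) :=
  mul_pos (G_pos γ c u) (sub_pos.mpr (G_lt_one γ c u))

lemma G_mul_one_sub_G_reflect (γ c t : ℝ) :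
    G γ c (c - t) * (1 - G γ c (c - t)) = G γ c (c + t) * (1 - G γ c (c + t)) := by
  rw [G_reflect]
  ring

lemma G_mul_one_sub_G_lt_quarter {γ t : ℝ} (hγ : γ ≠ 0) (ht : t ≠ 0) (c : ℝ) :
    G γ c (c + t) * (1 - G γ c (c + t)) < 4⁻¹ := by
  have hsq : 0 < (G γ c (c + t) - 2⁻¹) ^ 2 :=
    sq_pos_of_ne_zero (sub_ne_zero.mpr (G_ne_half hγ ht c))
  nlinarith

/-- If `f(u) = b₁·(u − c)·G(u)·(1 − G(u)) + b₂·G(u)·(1 − G(u))` is constant on `ℝ`,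
then `b₁ = b₂ = 0`. -/
theorem stmt11 (γ c b₁ b₂ : ℝ) (hγ : 0 < γ)
    (hconst : ∀ u v : ℝ,
      b₁ * (u - c) * G γ c u * (1 - G γ c u) + b₂ * (G γ c u * (1 - G γ c u)) =
        b₁ * (v - c) * G γ c v * (1 - G γ c v) + b₂ * (G γ c v * (1 - G γ c v))) :
    b₁ = 0 ∧ b₂ = 0 := by
  have hb₁ : b₁ = 0 := by
    have h := hconst (c + 1) (c - 1)
    have hrefl := G_mul_one_sub_G_reflect γ c 1
    have : b₁ * (2 * (G γ c (c + 1) * (1 - G γ c (c + 1)))) = 0 := by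
      linear_combination h + (b₂ - b₁) * hrefl
    exact (mul_eq_zero.mp this).resolve_right (by linarith [G_mul_one_sub_G_pos γ c (c + 1)])
  refine ⟨hb₁, ?_⟩
  have h := hconst (c + 1) c
  rw [G_self, hb₁] at h
  have : b₂ * (G γ c (c + 1) * (1 - G γ c (c + 1)) - 4⁻¹) = 0 := by linear_combination h
  have hlt := G_mul_one_sub_G_lt_quarter hγ.ne' one_ne_zero c
  exact (mul_eq_zero.mp this).resolve_right (sub_neg.mpr hlt).ne
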